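/- Let P be a regular n×n complex matrix polynomial of degree d, let ℓ ≥ 1 divide d, and let ℒ(λ) be an (ε,n,η,n)-block Kronecker ℓ-ification of P built from a solution M(λ) of (Λ_η(λ^ℓ)^T ⊗ I_n) M(λ) (Λ_ε(λ^ℓ) ⊗ I_n) = P(λ). Let λ0 ∈ ℂ be a finite nonzero eigenvalue of P, i.e., λ0 ≠ 0 and det P(λ0) = 0. Then a nonzero vector z ∈ ℂ^{(d/ℓ)n} satisfies ℒ(λ0) z = 0 if and only if z = G(λ0; ε, η, M) x for some nonzero x ∈ ℂ^n with P(λ0) x = 0. -/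

import Mathlib

/-!
Split `z = (z₁, z₂)` along the block structure of `ℒ(λ₀)` and put `t = λ₀^ℓ`. The bottom block
row says `(L_ε(t) ⊗ I_n) z₁ = 0`, whose solutions are the vectors `(Λ_ε(t) ⊗ I_n) w`.
Multiplying the top block row `M z₁ + (L_η(t)ᵀ ⊗ I_n) z₂ = 0` by `Λ_η(t)ᵀ ⊗ I_n` kills the
second term, since `L_η(t) Λ_η(t) = 0`, and leaves `P(λ₀) w = 0`. As `L_η(t)ᵀ ⊗ I_n` is injective,
the top row then determines `z₂`, and the identity `L_η(t)ᵀ S_η(t) u = t^η u` for all `u` with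
`(Λ_η(t)ᵀ ⊗ I_n) u = 0` identifies it as `−S_η(t) M Λ_ε(t) x` with `x = λ₀^(−ηℓ) w`.
The same identity gives the converse.
-/

open Matrix BigOperators

noncomputable section

/-- Evaluation at `x` of the matrix polynomial with coefficients `C 0, …, C N`. -/
def mpEval {α β : Type*} (N : ℕ) (C : ℕ → Matrix α β ℂ) (x : ℂ) : Matrix α β ℂ :=
  ∑ i ∈ Finset.range (N + 1), x ^ i • C i

/-- Entrywise derivative of the matrix polynomial, evaluated at `x`. -/
def mpDer {α β : Type*} (N : ℕ) (C : ℕ → Matrix α β ℂ) (x : ℂ) : Matrix α β ℂ :=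
  ∑ i ∈ Finset.range (N + 1), ((i : ℂ) * x ^ (i - 1)) • C i

/-- Spectral norm (operator 2-norm, i.e. largest singular value) of a complex matrix. -/
def sNorm {α β : Type*} [Fintype α] [Fintype β] [DecidableEq β] (A : Matrix α β ℂ) : ℝ :=
  ‖LinearMap.toContinuousLinearMap (Matrix.toEuclideanLin A)‖

/-- Euclidean norm of a complex vector. -/
def vNorm {α : Type*} [Fintype α] (v : α → ℂ) : ℝ :=
  Real.sqrt (∑ i, ‖v i‖ ^ 2)

/-- `Λ_k(x^ℓ) ⊗ I_n`, a `(k+1)n × n` matrix whose `i`-th (0-based) `n × n` block is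
`x^(ℓ(k−i)) I_n`. -/
def LamI (n k l : ℕ) (x : ℂ) : Matrix (Fin (k + 1) × Fin n) (Fin n) ℂ :=
  Matrix.of fun p s => if p.2 = s then x ^ (l * (k - (p.1 : ℕ))) else 0

/-- `L_k(x^ℓ) ⊗ I_n`, a `kn × (k+1)n` matrix. -/
def LkI (n k l : ℕ) (x : ℂ) : Matrix (Fin k × Fin n) (Fin (k + 1) × Fin n) ℂ :=
  Matrix.of fun p q =>
    if p.2 = q.2 then
      if (q.1 : ℕ) = (p.1 : ℕ) then -1
      else if (q.1 : ℕ) = (p.1 : ℕ) + 1 then x ^ l else 0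
    else 0

/-- The degree-`0` coefficient of `L_k(λ^ℓ) ⊗ I_n`. -/
def LkI0 (n k : ℕ) : Matrix (Fin k × Fin n) (Fin (k + 1) × Fin n) ℂ :=
  Matrix.of fun p q => if p.2 = q.2 ∧ (q.1 : ℕ) = (p.1 : ℕ) then -1 else 0

/-- The degree-`ℓ` coefficient of `L_k(λ^ℓ) ⊗ I_n`. -/
def LkI1 (n k : ℕ) : Matrix (Fin k × Fin n) (Fin (k + 1) × Fin n) ℂ :=
  Matrix.of fun p q => if p.2 = q.2 ∧ (q.1 : ℕ) = (p.1 : ℕ) + 1 then 1 else 0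

/-- `R_k(x^ℓ)`: `n × n` blocks `x^(ℓ(i−j)) I_n` for `j ≤ i` (0-based), `0` otherwise. -/
def Rmat (n k l : ℕ) (x : ℂ) : Matrix (Fin k × Fin n) (Fin (k + 1) × Fin n) ℂ :=
  Matrix.of fun p q =>
    if p.2 = q.2 ∧ (q.1 : ℕ) ≤ (p.1 : ℕ) then x ^ (l * ((p.1 : ℕ) - (q.1 : ℕ))) else 0

/-- `S_k(x^ℓ)`: `n × n` blocks `x^(ℓ(k+i−j)) I_n` for `i < j` (0-based), `0` otherwise. -/
def Smat (n k l : ℕ) (x : ℂ) : Matrix (Fin k × Fin n) (Fin (k + 1) × Fin n) ℂ :=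
  Matrix.of fun p q =>
    if p.2 = q.2 ∧ (p.1 : ℕ) < (q.1 : ℕ) then x ^ (l * (k + (p.1 : ℕ) - (q.1 : ℕ))) else 0

/-- The block column `H(x; p, q, N) = [Λ_p(x^ℓ) ⊗ I_n ; R_q(x^ℓ) N(x) (Λ_p(x^ℓ) ⊗ I_n)]`. -/
def Hmat (n l p q : ℕ) (N : ℂ → Matrix (Fin (q + 1) × Fin n) (Fin (p + 1) × Fin n) ℂ)
    (x : ℂ) : Matrix ((Fin (p + 1) × Fin n) ⊕ (Fin q × Fin n)) (Fin n) ℂ :=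
  Matrix.of fun r c =>
    Sum.elim (fun a => LamI n p l x a c)
      (fun a => (Rmat n q l x * (N x * LamI n p l x)) a c) r

/-- The block column `G(x; p, q, N) = [x^(qℓ)(Λ_p(x^ℓ) ⊗ I_n) ; −S_q(x^ℓ) N(x) (Λ_p(x^ℓ) ⊗ I_n)]`. -/
def Gmat (n l p q : ℕ) (N : ℂ → Matrix (Fin (q + 1) × Fin n) (Fin (p + 1) × Fin n) ℂ)
    (x : ℂ) : Matrix ((Fin (p + 1) × Fin n) ⊕ (Fin q × Fin n)) (Fin n) ℂ :=
  Matrix.of fun r c =>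
    Sum.elim (fun a => x ^ (q * l) * LamI n p l x a c)
      (fun a => (-(Smat n q l x * (N x * LamI n p l x))) a c) r

/-- Coefficients of the `(ε,n,η,n)`-block Kronecker `ℓ`-ification
`ℒ(λ) = [[M(λ), L_η(λ^ℓ)ᵀ ⊗ I_n], [L_ε(λ^ℓ) ⊗ I_n, 0]]`. -/
def LcalCoef (n l ε η : ℕ)
    (M : ℕ → Matrix (Fin (η + 1) × Fin n) (Fin (ε + 1) × Fin n) ℂ) (i : ℕ) :
    Matrix ((Fin (η + 1) × Fin n) ⊕ (Fin ε × Fin n))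
      ((Fin (ε + 1) × Fin n) ⊕ (Fin η × Fin n)) ℂ :=
  Matrix.fromBlocks (M i)
    (if i = 0 then (LkI0 n η)ᵀ else if i = l then (LkI1 n η)ᵀ else 0)
    (if i = 0 then LkI0 n ε else if i = l then LkI1 n ε else 0) 0

/-- `det P(λ)` as a scalar polynomial, where `P(λ) = Σ_{i=0}^d A_i λ^i`. -/
def detPoly (n d : ℕ) (A : ℕ → Matrix (Fin n) (Fin n) ℂ) : Polynomial ℂ :=
  (∑ i ∈ Finset.range (d + 1), (Polynomial.X : Polynomial ℂ) ^ i • (A i).map Polynomial.C).det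

/-- The horizontal concatenation `[A_0 A_1 ⋯ A_d]`. -/
def rowConcat (n d : ℕ) (A : ℕ → Matrix (Fin n) (Fin n) ℂ) :
    Matrix (Fin n) (Fin (d + 1) × Fin n) ℂ :=
  Matrix.of fun r q => A (q.1 : ℕ) r q.2

/-- Coefficientwise eigenvalue condition number of `Q(λ) = Σ_{i=0}^N C_i λ^i` at the
eigentriple `(v, x0, u)`. -/
def coeffCond {α β : Type*} [Fintype α] [Fintype β] [DecidableEq β] (N : ℕ)
    (C : ℕ → Matrix α β ℂ) (x0 : ℂ) (u : β → ℂ) (v : α → ℂ) : ℝ :=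
  (∑ i ∈ Finset.range (N + 1), ‖x0‖ ^ i * sNorm (C i)) * vNorm u * vNorm v /
    (‖x0‖ * ‖dotProduct (star v) ((mpDer N C x0).mulVec u)‖)

/-- Normwise eigenvalue condition number of `P(λ) = Σ_{i=0}^d A_i λ^i` at `(y, x0, x)`. -/
def normCond (n d : ℕ) (A : ℕ → Matrix (Fin n) (Fin n) ℂ) (x0 : ℂ)
    (x y : Fin n → ℂ) : ℝ :=
  sNorm (rowConcat n d A) * (∑ i ∈ Finset.range (d + 1), ‖x0‖ ^ i) *
      vNorm x * vNorm y /
    (‖x0‖ * ‖dotProduct (star y) ((mpDer d A x0).mulVec x)‖)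

/-- Each `n × n` block of each coefficient `M_t`, `t = 0, …, ℓ`, is `0`, `I_n`,
or one of the coefficients `A_s` of `P`.  -/
def IsCompanionM (n d l ε η : ℕ) (A : ℕ → Matrix (Fin n) (Fin n) ℂ)
    (M : ℕ → Matrix (Fin (η + 1) × Fin n) (Fin (ε + 1) × Fin n) ℂ) : Prop :=
  ∀ t ≤ l, ∀ (i : Fin (η + 1)) (j : Fin (ε + 1)),
    (Matrix.of fun r s => M t (i, r) (j, s)) = 0 ∨
    (Matrix.of fun r s => M t (i, r) (j, s)) = (1 : Matrix (Fin n) (Fin n) ℂ) ∨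
    ∃ s ≤ d, (Matrix.of fun r s' => M t (i, r) (j, s')) = A s

-- The `i`-th entry of `S_k(t) u` for `i < k`, extended by `0` to all `i : ℕ`.
def hornerTail (k : ℕ) (t : ℂ) (u : Fin (k + 1) → ℂ) (i : ℕ) : ℂ :=
  ∑ m : Fin (k + 1), if i < m then t ^ (k + i - m) * u m else 0

section HornerTail

variable {k : ℕ} {t : ℂ} {u : Fin (k + 1) → ℂ}

lemma hornerTail_of_le {i : ℕ} (h : k ≤ i) : hornerTail k t u i = 0 :=
  Finset.sum_eq_zero fun m _ => if_neg (by omega)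

lemma hornerTail_zero :
    hornerTail k t u 0 = ∑ m : Fin (k + 1), t ^ (k - m) * u m - t ^ k * u 0 := by
  simp [hornerTail, Fin.sum_univ_succ]

lemma mul_hornerTail {i : ℕ} (h : i < k) :
    t * hornerTail k t u i = t ^ k * u ⟨i + 1, by omega⟩ + hornerTail k t u (i + 1) := by
  have hsplit : ∀ m : Fin (k + 1), t * (if i < m then t ^ (k + i - m) * u m else 0) =
      (if m = ⟨i + 1, by omega⟩ then t ^ k * u m else 0) +
        if i + 1 < m then t ^ (k + (i + 1) - m) * u m else 0 := by
    intro m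
    simp only [Fin.ext_iff]
    split_ifs <;> first | omega | simp only [mul_zero, add_zero, zero_add]
    all_goals rw [← mul_assoc, ← pow_succ']; congr 2; omega
  rw [hornerTail, hornerTail, Finset.mul_sum, Finset.sum_congr rfl fun m _ => hsplit m,
    Finset.sum_add_distrib, Finset.sum_ite_eq']
  simp

end HornerTail

lemma Fin.sum_ite_val_eq {R : Type*} [AddCommMonoid R] {k : ℕ} (m : ℕ) (f : Fin k → R) :
    ∑ i : Fin k, (if m = i then f i else 0) = if h : m < k then f ⟨m, h⟩ else 0 := by
  split_ifs with h
  · rw [Fintype.sum_eq_single ⟨m, h⟩ fun i hi => if_neg fun he => hi (Fin.ext he.symm)]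
    simp
  · exact Finset.sum_eq_zero fun i _ => if_neg fun he : m = i => h (he ▸ i.isLt)

lemma pow_mul_sub_of_lt {M : Type*} [Monoid M] (x : M) {l i k : ℕ} (h : i < k) :
    x ^ (l * (k - i)) = x ^ l * x ^ (l * (k - (i + 1))) := by
  rw [show k - i = k - (i + 1) + 1 by omega, mul_add_one, pow_add, pow_mul_comm]

section BlockMatrices

variable {n k l : ℕ} {x : ℂ}

lemma LamI_mulVec_apply (w : Fin n → ℂ) (j : Fin (k + 1)) (s : Fin n) :
    (LamI n k l x *ᵥ w) (j, s) = x ^ (l * (k - j)) * w s := by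
  simp [mulVec, dotProduct, LamI, ite_mul]

lemma LamI_transpose_mulVec_apply (u : Fin (k + 1) × Fin n → ℂ) (s : Fin n) :
    ((LamI n k l x)ᵀ *ᵥ u) s = ∑ m : Fin (k + 1), x ^ (l * (k - m)) * u (m, s) := by
  simp [mulVec, dotProduct, LamI, ite_mul, Fintype.sum_prod_type]

lemma LkI_mulVec_apply (v : Fin (k + 1) × Fin n → ℂ) (i : Fin k) (s : Fin n) :
    (LkI n k l x *ᵥ v) (i, s) = x ^ l * v (i.succ, s) - v (i.castSucc, s) := by
  simp only [mulVec, dotProduct, LkI, of_apply, Fintype.sum_prod_type, ite_mul, zero_mul,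
    Finset.sum_ite_eq, Finset.mem_univ, if_true]
  rw [Fintype.sum_eq_add i.castSucc i.succ (Fin.castSucc_lt_succ (i := i)).ne]
  · simp only [Fin.val_castSucc, Fin.val_succ, if_true, Nat.add_eq_left, one_ne_zero, if_false,
      neg_mul, one_mul]
    ring
  · rintro j ⟨h1, h2⟩
    simp only [ne_eq, Fin.ext_iff, Fin.val_castSucc, Fin.val_succ] at h1 h2
    simp [h1, h2]

lemma LkI_transpose_mulVec_apply (w : Fin k × Fin n → ℂ) (j : Fin (k + 1)) (s : Fin n) :
    ((LkI n k l x)ᵀ *ᵥ w) (j, s) =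
      x ^ l * (if h : 0 < (j : ℕ) then w (⟨j - 1, by omega⟩, s) else 0) -
        if h : (j : ℕ) < k then w (⟨j, h⟩, s) else 0 := by
  simp only [mulVec, dotProduct, LkI, of_apply, transpose_apply, Fintype.sum_prod_type, ite_mul,
    zero_mul, Finset.sum_ite_eq', Finset.mem_univ, if_true]
  have hsplit : ∀ i : Fin k,
      (if (j : ℕ) = i then -1 * w (i, s) else if (j : ℕ) = i + 1 then x ^ l * w (i, s) else 0) =
        (if (j : ℕ) - 1 = i then (if 0 < (j : ℕ) then x ^ l * w (i, s) else 0) else 0) -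
          if (j : ℕ) = i then w (i, s) else 0 := by
    intro i
    split_ifs <;> first | omega | ring
  rw [Finset.sum_congr rfl fun i _ => hsplit i, Finset.sum_sub_distrib, Fin.sum_ite_val_eq,
    Fin.sum_ite_val_eq]
  by_cases hj : 0 < (j : ℕ)
  · simp [hj, show (j : ℕ) - 1 < k by omega]
  · simp [hj]

lemma Smat_mulVec_apply (u : Fin (k + 1) × Fin n → ℂ) (i : Fin k) (s : Fin n) :
    (Smat n k l x *ᵥ u) (i, s) = hornerTail k (x ^ l) (fun m => u (m, s)) i := by
  simp only [mulVec, dotProduct, Smat, of_apply, Fintype.sum_prod_type, ite_and, ite_mul,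
    zero_mul, Finset.sum_ite_eq, Finset.mem_univ, if_true, hornerTail, pow_mul]

lemma LkI_mul_LamI : LkI n k l x * LamI n k l x = 0 := by
  refine ext_of_mulVec_single fun s => ?_
  ext ⟨i, r⟩
  rw [zero_mulVec, Pi.zero_apply, ← mulVec_mulVec, LkI_mulVec_apply, LamI_mulVec_apply,
    LamI_mulVec_apply]
  simp only [Fin.val_castSucc, Fin.val_succ, pow_mul_sub_of_lt x i.isLt]
  ring

lemma eq_LamI_mulVec_of_LkI_mulVec_eq_zero {v : Fin (k + 1) × Fin n → ℂ}
    (h : LkI n k l x *ᵥ v = 0) : v = LamI n k l x *ᵥ fun s => v (Fin.last k, s) := by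
  ext ⟨j, s⟩
  rw [LamI_mulVec_apply]
  induction j using Fin.reverseInduction with
  | last => simp
  | cast i ih =>
    have hi : x ^ l * v (i.succ, s) - v (i.castSucc, s) = 0 := by
      rw [← LkI_mulVec_apply, h, Pi.zero_apply]
    rw [Fin.val_castSucc, pow_mul_sub_of_lt x i.isLt, mul_assoc, ← Fin.val_succ, ← ih]
    linear_combination -hi

lemma LkI_transpose_mulVec_injective : Function.Injective (LkI n k l x)ᵀ.mulVec := by
  intro w w' h
  rw [← sub_eq_zero]
  generalize hw : w - w' = e
  have he : (LkI n k l x)ᵀ *ᵥ e = 0 := by rw [← hw, mulVec_sub, h, sub_self]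
  ext ⟨⟨i, hi⟩, s⟩
  rw [Pi.zero_apply]
  induction i with
  | zero =>
    have := congrFun he (⟨0, by omega⟩, s)
    simpa [LkI_transpose_mulVec_apply, hi] using this
  | succ i ih =>
    have := congrFun he (⟨i + 1, by omega⟩, s)
    simpa [LkI_transpose_mulVec_apply, hi, ih (by omega)] using this

lemma LkI_transpose_mulVec_Smat_mulVec {u : Fin (k + 1) × Fin n → ℂ}
    (hu : (LamI n k l x)ᵀ *ᵥ u = 0) :
    (LkI n k l x)ᵀ *ᵥ (Smat n k l x *ᵥ u) = x ^ (l * k) • u := by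
  ext ⟨⟨j, hj⟩, s⟩
  rw [LkI_transpose_mulVec_apply]
  simp only [Smat_mulVec_apply, Pi.smul_apply, smul_eq_mul, dite_eq_ite]
  rw [ite_eq_left_iff.2 fun h => (hornerTail_of_le (not_lt.1 h)).symm]
  cases j with
  | zero =>
    have hsum := congrFun hu s
    rw [LamI_transpose_mulVec_apply] at hsum
    simp only [pow_mul] at hsum
    simp [hornerTail_zero, hsum, pow_mul]
  | succ j =>
    simp [mul_hornerTail (show j < k by omega), pow_mul]

end BlockMatrices

section MatrixPolynomial

variable {α β γ δ : Type*} {N : ℕ}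

lemma mpEval_fromBlocks (A : ℕ → Matrix α β ℂ) (B : ℕ → Matrix α δ ℂ) (C : ℕ → Matrix γ β ℂ)
    (D : ℕ → Matrix γ δ ℂ) (x : ℂ) :
    mpEval N (fun i => fromBlocks (A i) (B i) (C i) (D i)) x =
      fromBlocks (mpEval N A x) (mpEval N B x) (mpEval N C x) (mpEval N D x) := by
  ext (r | r) (c | c) <;> simp [mpEval, Matrix.sum_apply]

lemma mpEval_transpose (A : ℕ → Matrix α β ℂ) (x : ℂ) :
    mpEval N (fun i => (A i)ᵀ) x = (mpEval N A x)ᵀ := by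
  simp [mpEval, transpose_sum]

end MatrixPolynomial

lemma mpEval_LkI {n k l : ℕ} (hl : l ≠ 0) (x : ℂ) :
    mpEval l (fun i => if i = 0 then LkI0 n k else if i = l then LkI1 n k else 0) x =
      LkI n k l x := by
  rw [mpEval, Finset.sum_eq_add_of_mem 0 l (by simp) (by simp) (Ne.symm hl)
    fun i _ hi => by simp [hi.1, hi.2]]
  ext ⟨i, r⟩ ⟨j, s⟩
  simp only [hl.symm, if_true, if_false, pow_zero, one_smul, Matrix.add_apply, Matrix.smul_apply,
    LkI, LkI0, LkI1, of_apply, smul_eq_mul]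
  split_ifs <;> first | omega | simp_all

lemma mpEval_LcalCoef {n l ε η : ℕ} (hl : l ≠ 0)
    (M : ℕ → Matrix (Fin (η + 1) × Fin n) (Fin (ε + 1) × Fin n) ℂ) (x : ℂ) :
    mpEval l (LcalCoef n l ε η M) x =
      fromBlocks (mpEval l M x) (LkI n η l x)ᵀ (LkI n ε l x) 0 := by
  have hT : ∀ i, (if i = 0 then (LkI0 n η)ᵀ else if i = l then (LkI1 n η)ᵀ else 0) =
      (if i = 0 then LkI0 n η else if i = l then LkI1 n η else 0)ᵀ := by
    intro i
    split_ifs <;> simp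
  unfold LcalCoef
  simp only [hT]
  rw [mpEval_fromBlocks, mpEval_transpose, mpEval_LkI hl, mpEval_LkI hl]
  simp [mpEval]

lemma Gmat_mulVec {n l p q : ℕ}
    (N : ℂ → Matrix (Fin (q + 1) × Fin n) (Fin (p + 1) × Fin n) ℂ) (x : ℂ) (v : Fin n → ℂ) :
    Gmat n l p q N x *ᵥ v =
      Sum.elim (x ^ (q * l) • (LamI n p l x *ᵥ v))
        (-(Smat n q l x *ᵥ (N x *ᵥ (LamI n p l x *ᵥ v)))) := by
  ext (a | a)
  · simp [Gmat, mulVec, dotProduct, Finset.mul_sum, mul_assoc]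
  · simp only [Sum.elim_inr, ← neg_mulVec, mulVec_mulVec]
    rfl

section KroneckerPencil

variable {n l ε η : ℕ} (N : ℂ → Matrix (Fin (η + 1) × Fin n) (Fin (ε + 1) × Fin n) ℂ) {x : ℂ}

lemma fromBlocks_mulVec_Gmat_mulVec {v : Fin n → ℂ}
    (hv : ((LamI n η l x)ᵀ * N x * LamI n ε l x) *ᵥ v = 0) :
    fromBlocks (N x) (LkI n η l x)ᵀ (LkI n ε l x) 0 *ᵥ (Gmat n l ε η N x *ᵥ v) = 0 := by
  set u := N x *ᵥ (LamI n ε l x *ᵥ v)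
  have hu : (LamI n η l x)ᵀ *ᵥ u = 0 := by
    rw [← hv]
    simp only [u, mulVec_mulVec, Matrix.mul_assoc]
  rw [Gmat_mulVec, fromBlocks_mulVec, ← Sum.elim_zero_zero, Sum.elim_eq_iff]
  simp only [Sum.elim_comp_inl, Sum.elim_comp_inr, zero_mulVec, mulVec_smul, mulVec_neg]
  constructor
  · rw [LkI_transpose_mulVec_Smat_mulVec hu, mul_comm η l, add_neg_cancel]
  · rw [mulVec_mulVec, LkI_mul_LamI, zero_mulVec, smul_zero, neg_zero, add_zero]

lemma exists_eq_Gmat_mulVec_of_fromBlocks_mulVec_eq_zero (hx : x ≠ 0)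
    {z : (Fin (ε + 1) × Fin n) ⊕ (Fin η × Fin n) → ℂ}
    (hz : fromBlocks (N x) (LkI n η l x)ᵀ (LkI n ε l x) 0 *ᵥ z = 0) :
    ∃ v, ((LamI n η l x)ᵀ * N x * LamI n ε l x) *ᵥ v = 0 ∧ z = Gmat n l ε η N x *ᵥ v := by
  rw [fromBlocks_mulVec, ← Sum.elim_zero_zero, Sum.elim_eq_iff, zero_mulVec, add_zero] at hz
  obtain ⟨htop, hbot⟩ := hz
  have hc : x ^ (η * l) ≠ 0 := pow_ne_zero _ hx
  set v := (x ^ (η * l))⁻¹ • fun s => z (Sum.inl (Fin.last ε, s))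
  have hz1 : z ∘ Sum.inl = x ^ (η * l) • (LamI n ε l x *ᵥ v) := by
    rw [mulVec_smul, smul_smul, mul_inv_cancel₀ hc, one_smul]
    exact eq_LamI_mulVec_of_LkI_mulVec_eq_zero hbot
  set u := N x *ᵥ (LamI n ε l x *ᵥ v)
  have hu : (LamI n η l x)ᵀ *ᵥ u = 0 := by
    have h : (LamI n η l x)ᵀ *ᵥ (N x *ᵥ (z ∘ Sum.inl)) = 0 := by
      rw [eq_neg_of_add_eq_zero_left htop, mulVec_neg, mulVec_mulVec, ← transpose_mul,
        LkI_mul_LamI, transpose_zero, zero_mulVec, neg_zero]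
    rwa [hz1, mulVec_smul, mulVec_smul, smul_eq_zero, or_iff_right hc] at h
  refine ⟨v, by rw [← hu]; simp only [u, mulVec_mulVec, Matrix.mul_assoc], ?_⟩
  have hz2 : z ∘ Sum.inr = -(Smat n η l x *ᵥ u) := by
    apply LkI_transpose_mulVec_injective
    rw [eq_neg_of_add_eq_zero_right htop, mulVec_neg,
      LkI_transpose_mulVec_Smat_mulVec hu, hz1, mulVec_smul, mul_comm l η]
  rw [Gmat_mulVec, ← hz1, ← hz2, Sum.elim_comp_inl_inr]

end KroneckerPencil

theorem stmt11_general (n d l ε η : ℕ) (hl : 1 ≤ l)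
    (A : ℕ → Matrix (Fin n) (Fin n) ℂ)
    (M : ℕ → Matrix (Fin (η + 1) × Fin n) (Fin (ε + 1) × Fin n) ℂ)
    (hM : ∀ x : ℂ, (LamI n η l x)ᵀ * mpEval l M x * LamI n ε l x = mpEval d A x)
    (lam0 : ℂ) (hlam0 : lam0 ≠ 0)
    (z : ((Fin (ε + 1) × Fin n) ⊕ (Fin η × Fin n)) → ℂ) (hz : z ≠ 0) :
    (mpEval l (LcalCoef n l ε η M) lam0).mulVec z = 0 ↔
      ∃ x : Fin n → ℂ, x ≠ 0 ∧ (mpEval d A lam0).mulVec x = 0 ∧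
        z = (Gmat n l ε η (mpEval l M) lam0).mulVec x := by
  rw [mpEval_LcalCoef (by omega), ← hM lam0]
  constructor
  · intro hLz
    obtain ⟨x, hPx, rfl⟩ :=
      exists_eq_Gmat_mulVec_of_fromBlocks_mulVec_eq_zero (mpEval l M) hlam0 hLz
    exact ⟨x, fun hx => hz (by rw [hx, mulVec_zero]), hPx, rfl⟩
  · rintro ⟨x, -, hPx, rfl⟩
    exact fromBlocks_mulVec_Gmat_mulVec (mpEval l M) hPx

/-- Right eigenvector formula (via `G`): for a finite nonzero eigenvalue `lam0` of the
regular polynomial `P`, a nonzero `z` satisfies `ℒ(lam0) z = 0` iff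
`z = G(lam0; ε, η, M) x` for some nonzero `x` with `P(lam0) x = 0`. -/
theorem stmt11 (n d l ε η : ℕ) (hn : 0 < n) (hl : 1 ≤ l) (hd : d = l * (ε + η + 1))
    (A : ℕ → Matrix (Fin n) (Fin n) ℂ) (hdeg : A d ≠ 0)
    (hreg : detPoly n d A ≠ 0)
    (M : ℕ → Matrix (Fin (η + 1) × Fin n) (Fin (ε + 1) × Fin n) ℂ)
    (hM : ∀ x : ℂ, (LamI n η l x)ᵀ * mpEval l M x * LamI n ε l x = mpEval d A x)
    (lam0 : ℂ) (hlam0 : lam0 ≠ 0) (heig : (mpEval d A lam0).det = 0)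
    (z : ((Fin (ε + 1) × Fin n) ⊕ (Fin η × Fin n)) → ℂ) (hz : z ≠ 0) :
    (mpEval l (LcalCoef n l ε η M) lam0).mulVec z = 0 ↔
      ∃ x : Fin n → ℂ, x ≠ 0 ∧ (mpEval d A lam0).mulVec x = 0 ∧
        z = (Gmat n l ε η (mpEval l M) lam0).mulVec x :=
  stmt11_general n d l ε η hl A M hM lam0 hlam0 z hz

end
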